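/- arXiv:2007.05164 — 6 statements merged into one kernel-verified Lean document; each statement's English description precedes it below -/
import Mathlib

section
/- Let m = 2n with n ≥ 1, and let S ⊆ Fin m be a set of size exactly n. Define f : Finset (Fin m) → ℕ by f(T) := min(|T|, n) − 1 if T = S, and f(T) := min(|T|, n) otherwise. Then f is a matroid rank function; that is: f(∅) = 0; f is monotone (T ⊆ U implies f(T) ≤ f(U)); f has unit marginals (f(T ∪ {i}) ≤ f(T) + 1 for all T and all i); and f is submodular (f(A ∪ B) + f(A ∩ B) ≤ f(A) + f(B) for all A, B). -/
/-!
`T ↦ min |T| n` is the rank function of the uniform matroid, hence submodular. Lowering a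
submodular function by one at a single set `S` can only break submodularity at pairs `(S, B)`
with `S` and `B` incomparable (for comparable pairs the inequality is an equality for every
function), and there the uniform rank is strictly submodular because `|S| = n` and `S ∩ B` is
a proper subset of both `S` and `B`. Monotonicity survives because every proper subset of `S`
already has rank below `n`, and unit marginals follow from submodularity since singletons
have rank at most one.
-/

open Finset Function

variable {α : Type*}

section Update

variable [DecidableEq α]

def IsSubmodular (r : Finset α → ℕ) : Prop :=
  ∀ A B : Finset α, r (A ∪ B) + r (A ∩ B) ≤ r A + r B

theorem union_add_inter_eq_of_subset_or_subset (g : Finset α → ℕ) {A B : Finset α}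
    (h : A ⊆ B ∨ B ⊆ A) : g (A ∪ B) + g (A ∩ B) = g A + g B := by
  rcases h with h | h
  · rw [union_eq_right.mpr h, inter_eq_left.mpr h, add_comm]
  · rw [union_eq_left.mpr h, inter_eq_right.mpr h]

theorem IsSubmodular.insert_le_add_one {g : Finset α → ℕ} (hg : IsSubmodular g)
    (i : α) (T : Finset α) (hi : g {i} ≤ 1) : g (insert i T) ≤ g T + 1 := by
  have := hg {i} T
  rw [← insert_eq] at this
  omega

theorem IsSubmodular.update_sub_one {r : Finset α → ℕ} (hr : IsSubmodular r) {S : Finset α}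
    (hS : ∀ B, ¬B ⊆ S → ¬S ⊆ B → r (S ∪ B) + r (S ∩ B) < r S + r B) :
    IsSubmodular (update r S (r S - 1)) := by
  set f := update r S (r S - 1)
  have hf_le (T : Finset α) : f T ≤ r T := by
    simp only [f, update_apply]; split_ifs with h <;> simp [h]
  have hf_eq {T : Finset α} (hT : T ≠ S) : f T = r T := update_of_ne hT _ _
  intro A B
  by_cases hcomp : A ⊆ B ∨ B ⊆ A
  · exact (union_add_inter_eq_of_subset_or_subset f hcomp).le
  push Not at hcomp
  obtain ⟨hAB, hBA⟩ := hcomp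
  have hlower := add_le_add (hf_le (A ∪ B)) (hf_le (A ∩ B))
  by_cases hA : A = S
  · subst hA
    have hB : B ≠ A := by rintro rfl; exact hAB subset_rfl
    have := hS B hBA hAB
    rw [hf_eq hB, show f A = r A - 1 from update_self _ _ _]
    omega
  by_cases hB : B = S
  · subst hB
    have := hS A hAB hBA
    rw [union_comm, inter_comm] at this
    rw [hf_eq hA, show f B = r B - 1 from update_self _ _ _]
    omega
  rw [hf_eq hA, hf_eq hB]
  exact hlower.trans (hr A B)

theorem monotone_update_sub_one {r : Finset α → ℕ} (hr : Monotone r) {S : Finset α}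
    (hS : ∀ T ⊂ S, r T < r S) : Monotone (update r S (r S - 1)) := by
  intro T U hTU
  simp only [update_apply]
  split_ifs with hT hU hU
  · subst hT hU; rfl
  · subst hT; have := hr hTU; omega
  · subst hU; have := hS T (ssubset_of_subset_of_ne hTU hT); omega
  · exact hr hTU

end Update

def uniformRank (n : ℕ) (T : Finset α) : ℕ := min T.card n

theorem monotone_uniformRank (n : ℕ) : Monotone (uniformRank (α := α) n) :=
  fun _ _ h => min_le_min_right n (card_le_card h)

theorem uniformRank_lt_of_ssubset {n : ℕ} {S T : Finset α} (hS : S.card = n) (h : T ⊂ S) :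
    uniformRank n T < uniformRank n S := by
  have := card_lt_card h
  simp only [uniformRank]
  omega

theorem isSubmodular_uniformRank [DecidableEq α] (n : ℕ) : IsSubmodular (uniformRank (α := α) n) := by
  intro A B
  have := card_union_add_card_inter A B
  have := card_le_card (inter_subset_left (s₁ := A) (s₂ := B))
  have := card_le_card (inter_subset_right (s₁ := A) (s₂ := B))
  simp only [uniformRank]
  omega

theorem uniformRank_union_add_inter_lt [DecidableEq α] {n : ℕ} {S B : Finset α} (hS : S.card = n)
    (hBS : ¬B ⊆ S) (hSB : ¬S ⊆ B) :
    uniformRank n (S ∪ B) + uniformRank n (S ∩ B) < uniformRank n S + uniformRank n B := by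
  have hS' : (S ∩ B).card < S.card := card_lt_card <|
    inter_subset_left.ssubset_of_not_subset fun h => hSB (h.trans inter_subset_right)
  have hB' : (S ∩ B).card < B.card := card_lt_card <|
    inter_subset_right.ssubset_of_not_subset fun h => hBS (h.trans inter_subset_left)
  simp only [uniformRank]
  omega

theorem perturbed_is_matroid_rank_general (n : ℕ)
    (S : Finset (Fin (2 * n))) (hS : S.card = n)
    (f : Finset (Fin (2 * n)) → ℕ)
    (hf : ∀ T : Finset (Fin (2 * n)),
      f T = if T = S then min T.card n - 1 else min T.card n) :
    f ∅ = 0 ∧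
    (∀ T U : Finset (Fin (2 * n)), T ⊆ U → f T ≤ f U) ∧
    (∀ (T : Finset (Fin (2 * n))) (i : Fin (2 * n)), f (insert i T) ≤ f T + 1) ∧
    (∀ A B : Finset (Fin (2 * n)), f (A ∪ B) + f (A ∩ B) ≤ f A + f B) := by
  have hf_update : f = update (uniformRank n) S (uniformRank n S - 1) := by
    funext T
    rw [hf, update_apply]
    split_ifs with hT
    · subst hT; rfl
    · rfl
  have hsub : IsSubmodular f := hf_update ▸
    (isSubmodular_uniformRank n).update_sub_one fun _ => uniformRank_union_add_inter_lt hS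
  refine ⟨?_, ?_, fun T i => hsub.insert_le_add_one i T ?_, hsub⟩
  · rw [hf]; split_ifs <;> simp
  · exact hf_update ▸ monotone_update_sub_one (monotone_uniformRank n)
      fun _ => uniformRank_lt_of_ssubset hS
  · rw [hf]; split_ifs <;> simp

/-- The perturbed binary-OXS valuation `f(T) = min(|T|, n) − 1` if `T = S`,
`min(|T|, n)` otherwise (for `|S| = n`, ground set of `2n` items), is a matroid
rank function: normalized, monotone, with unit marginals, and submodular. -/
theorem perturbed_is_matroid_rank (n : ℕ) (hn : 1 ≤ n)
    (S : Finset (Fin (2 * n))) (hS : S.card = n)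
    (f : Finset (Fin (2 * n)) → ℕ)
    (hf : ∀ T : Finset (Fin (2 * n)),
      f T = if T = S then min T.card n - 1 else min T.card n) :
    f ∅ = 0 ∧
    (∀ T U : Finset (Fin (2 * n)), T ⊆ U → f T ≤ f U) ∧
    (∀ (T : Finset (Fin (2 * n))) (i : Fin (2 * n)), f (insert i T) ≤ f T + 1) ∧
    (∀ A B : Finset (Fin (2 * n)), f (A ∪ B) + f (A ∩ B) ≤ f A + f B) :=
  perturbed_is_matroid_rank_general n S hS f hf
end

section
/- Let M be a matroid on a finite ground set E with independent-set family I, and let y be a natural number. Then: (a) the family I_y := {T ∈ I : |T| ≤ y} is the independent-set family of a matroid on E; and (b) for any nonnegative weight function c : E → ℝ≥0, defining the matroid-based valuation v(S) := max{Σ_{e∈T} c(e) : T ⊆ S, T ∈ I}, the item truncation of v at y satisfies, for every S ⊆ E: max{v(T) : T ⊆ S, |T| ≤ y} = max{Σ_{e∈T} c(e) : T ⊆ S, T ∈ I_y}. In particular, the class of matroid-based valuations is closed under item truncation. -/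
open Finset

/-- The matroid-based valuation associated to an independent-set family `I`
and nonnegative weights `c` : `v(S) = max{Σ_{e∈T} c e : T ⊆ S, I T}`. -/
def matroidBasedVal {E : Type*} (I : Finset E → Prop) [DecidablePred I]
    (c : E → NNReal) (S : Finset E) : NNReal :=
  (S.powerset.filter I).sup (fun T => ∑ e ∈ T, c e)

section Truncation

variable {E : Type*} {I : Finset E → Prop} {y : ℕ}

theorem truncation_hereditary (hdown : ∀ A B : Finset E, A ⊆ B → I B → I A)
    {A B : Finset E} (hAB : A ⊆ B) (hB : I B ∧ B.card ≤ y) : I A ∧ A.card ≤ y :=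
  ⟨hdown A B hAB hB.1, (card_le_card hAB).trans hB.2⟩

theorem truncation_augment [DecidableEq E]
    (haug : ∀ A B : Finset E, I A → I B → A.card < B.card → ∃ e ∈ B, e ∉ A ∧ I (insert e A))
    {A B : Finset E} (hA : I A ∧ A.card ≤ y) (hB : I B ∧ B.card ≤ y) (hAB : A.card < B.card) :
    ∃ e ∈ B, e ∉ A ∧ (I (insert e A) ∧ (insert e A).card ≤ y) := by
  obtain ⟨e, heB, heA, hins⟩ := haug A B hA.1 hB.1 hAB
  refine ⟨e, heB, heA, hins, ?_⟩
  calc (insert e A).card ≤ A.card + 1 := card_insert_le e A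
    _ ≤ B.card := hAB
    _ ≤ y := hB.2

end Truncation

section MatroidBasedVal

variable {E : Type*} {I : Finset E → Prop} [DecidablePred I] {c : E → NNReal}

theorem sum_le_matroidBasedVal {S T : Finset E} (hT : I T) (hTS : T ⊆ S) :
    ∑ e ∈ T, c e ≤ matroidBasedVal I c S :=
  le_sup (f := fun T => ∑ e ∈ T, c e) (mem_filter.2 ⟨mem_powerset.2 hTS, hT⟩)

theorem matroidBasedVal_le_iff {S : Finset E} {b : NNReal} :
    matroidBasedVal I c S ≤ b ↔ ∀ T ⊆ S, I T → ∑ e ∈ T, c e ≤ b := by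
  simp only [matroidBasedVal, Finset.sup_le_iff, mem_filter, mem_powerset, and_imp]

theorem sup_matroidBasedVal_eq_of_hereditary (P : Finset E → Prop) [DecidablePred P]
    (hP : ∀ A B : Finset E, A ⊆ B → P B → P A) (S : Finset E) :
    (S.powerset.filter P).sup (matroidBasedVal I c)
      = (S.powerset.filter (fun T => I T ∧ P T)).sup (fun T => ∑ e ∈ T, c e) := by
  apply le_antisymm
  · simp only [Finset.sup_le_iff, mem_filter, mem_powerset, and_imp]
    intro T hTS hPT
    refine matroidBasedVal_le_iff.2 fun U hUT hU => ?_
    exact le_sup (f := fun T => ∑ e ∈ T, c e)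
      (mem_filter.2 ⟨mem_powerset.2 (hUT.trans hTS), hU, hP U T hUT hPT⟩)
  · simp only [Finset.sup_le_iff, mem_filter, mem_powerset, and_imp]
    intro T hTS hT hPT
    exact (sum_le_matroidBasedVal hT subset_rfl).trans
      (le_sup (mem_filter.2 ⟨mem_powerset.2 hTS, hPT⟩))

end MatroidBasedVal

theorem matroidBased_closed_under_itemTruncation_general
    {E : Type*} [DecidableEq E]
    (I : Finset E → Prop) [DecidablePred I]
    (hempty : I ∅)
    (hdown : ∀ A B : Finset E, A ⊆ B → I B → I A)
    (haug : ∀ A B : Finset E, I A → I B → A.card < B.card →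
      ∃ e ∈ B, e ∉ A ∧ I (insert e A))
    (y : ℕ) (c : E → NNReal) :
    -- (a) the truncated family `I_y = {T ∈ I : |T| ≤ y}` is a matroid
    ((I ∅ ∧ (∅ : Finset E).card ≤ y) ∧
     (∀ A B : Finset E, A ⊆ B → (I B ∧ B.card ≤ y) → (I A ∧ A.card ≤ y)) ∧
     (∀ A B : Finset E, (I A ∧ A.card ≤ y) → (I B ∧ B.card ≤ y) →
        A.card < B.card → ∃ e ∈ B, e ∉ A ∧ (I (insert e A) ∧ (insert e A).card ≤ y))) ∧
    -- (b) item truncation of the valuation = valuation of the truncated matroid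
    (∀ S : Finset E,
      (S.powerset.filter (fun T => T.card ≤ y)).sup (matroidBasedVal I c)
        = (S.powerset.filter (fun T => I T ∧ T.card ≤ y)).sup
            (fun T => ∑ e ∈ T, c e)) :=
  ⟨⟨⟨hempty, Nat.zero_le y⟩, fun _ _ => truncation_hereditary hdown,
      fun _ _ => truncation_augment haug⟩,
    sup_matroidBasedVal_eq_of_hereditary _ fun _ _ hAB hB => (card_le_card hAB).trans hB⟩

/-- Truncating a matroid at cardinality `y` yields a matroid, and the item
truncation at `y` of the associated matroid-based valuation is exactly the
matroid-based valuation of the truncated matroid (with the same weights).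
Hence matroid-based valuations are closed under item truncation. -/
theorem matroidBased_closed_under_itemTruncation
    {E : Type*} [Fintype E] [DecidableEq E]
    (I : Finset E → Prop) [DecidablePred I]
    (hempty : I ∅)
    (hdown : ∀ A B : Finset E, A ⊆ B → I B → I A)
    (haug : ∀ A B : Finset E, I A → I B → A.card < B.card →
      ∃ e ∈ B, e ∉ A ∧ I (insert e A))
    (y : ℕ) (c : E → NNReal) :
    -- (a) the truncated family `I_y = {T ∈ I : |T| ≤ y}` is a matroid
    ((I ∅ ∧ (∅ : Finset E).card ≤ y) ∧
     (∀ A B : Finset E, A ⊆ B → (I B ∧ B.card ≤ y) → (I A ∧ A.card ≤ y)) ∧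
     (∀ A B : Finset E, (I A ∧ A.card ≤ y) → (I B ∧ B.card ≤ y) →
        A.card < B.card → ∃ e ∈ B, e ∉ A ∧ (I (insert e A) ∧ (insert e A).card ≤ y))) ∧
    -- (b) item truncation of the valuation = valuation of the truncated matroid
    (∀ S : Finset E,
      (S.powerset.filter (fun T => T.card ≤ y)).sup (matroidBasedVal I c)
        = (S.powerset.filter (fun T => I T ∧ T.card ≤ y)).sup
            (fun T => ∑ e ∈ T, c e)) :=
  matroidBased_closed_under_itemTruncation_general I hempty hdown haug y c
end

section
/- Let k ≥ 1 be an integer, C ≥ 1 a real number, and a : {1,…,k} × {1,…,k} → ℝ satisfy: 0 ≤ a(ℓ,i) ≤ C for all ℓ, i; a(ℓ,ℓ) ≥ a(ℓ,ℓ−1) + 1 for all 2 ≤ ℓ ≤ k; and a(ℓ,ℓ−1) ≥ a(ℓ,i) + 1 for all ℓ and all i ≤ ℓ−2. Then for every permutation σ of {1,…,k}: Σ_{ℓ=1}^{k} (C+1)^{ℓ−1} · a(ℓ, σ(ℓ)) ≤ Σ_{ℓ=1}^{k} (C+1)^{ℓ−1} · a(ℓ, ℓ). That is, the identity matching is a maximum-weight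 matching of rows to columns when row ℓ is scaled by (C+1)^{ℓ−1}. -/
/-!
Induct on `k`. If the permutation fixes the top row `k`, discard that row. Otherwise it sends
`k` to an earlier column, and the diagonal gap costs the top row at least `(C+1)^(k-1)`; every
lower row `ℓ` gains at most `(C+1)^(ℓ-1) * C`, and these gains add up to the geometric sum
`(C+1)^(k-1) - 1`, which is less than that cost.
-/

open Finset

theorem sum_Icc_pow_pred_mul_sub_one {R : Type*} [CommRing R] (x : R) (n : ℕ) :
    ∑ ℓ ∈ Icc 1 n, x ^ (ℓ - 1) * (x - 1) = x ^ n - 1 := by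
  induction n with
  | zero => simp
  | succ n ih =>
    rw [sum_Icc_succ_top (by omega), ih, Nat.add_sub_cancel]
    ring

theorem sum_Icc_pow_pred_mul_le_add_of_le_add {C : ℝ} (hC : 0 ≤ C + 1) {f g : ℕ → ℝ}
    {n : ℕ} (hfg : ∀ ℓ ∈ Icc 1 n, f ℓ ≤ g ℓ + C) :
    ∑ ℓ ∈ Icc 1 n, (C + 1) ^ (ℓ - 1) * f ℓ
      ≤ ∑ ℓ ∈ Icc 1 n, (C + 1) ^ (ℓ - 1) * g ℓ + ((C + 1) ^ n - 1) :=
  calc ∑ ℓ ∈ Icc 1 n, (C + 1) ^ (ℓ - 1) * f ℓ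
      ≤ ∑ ℓ ∈ Icc 1 n, ((C + 1) ^ (ℓ - 1) * g ℓ + (C + 1) ^ (ℓ - 1) * (C + 1 - 1)) :=
        sum_le_sum fun ℓ hℓ => by
          rw [← mul_add, add_sub_cancel_right]
          exact mul_le_mul_of_nonneg_left (hfg ℓ hℓ) (pow_nonneg hC _)
    _ = _ := by rw [sum_add_distrib, sum_Icc_pow_pred_mul_sub_one]

theorem mapsTo_Icc_of_mapsTo_Icc_succ_of_fix {σ : ℕ → ℕ} {n : ℕ}
    (hmap : ∀ ℓ ∈ Icc 1 (n + 1), σ ℓ ∈ Icc 1 (n + 1))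
    (hinj : Set.InjOn σ (Icc 1 (n + 1))) (hfix : σ (n + 1) = n + 1) :
    ∀ ℓ ∈ Icc 1 n, σ ℓ ∈ Icc 1 n := by
  intro ℓ hℓ
  have hℓ' : ℓ ∈ Icc 1 (n + 1) := Icc_subset_Icc_right n.le_succ hℓ
  have hne : σ ℓ ≠ n + 1 := fun h => by
    have := hinj hℓ' (by simp) (h.trans hfix.symm)
    simp only [mem_Icc] at hℓ
    omega
  have := hmap ℓ hℓ'
  simp only [mem_Icc] at this ⊢
  omega

theorem add_one_le_diag_of_mem_Ico {k : ℕ} {a : ℕ → ℕ → ℝ}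
    (hdiag : ∀ ℓ : ℕ, 2 ≤ ℓ → ℓ ≤ k → a ℓ (ℓ - 1) + 1 ≤ a ℓ ℓ)
    (hlower : ∀ ℓ ∈ Icc 1 k, ∀ i : ℕ, 1 ≤ i → i ≤ ℓ - 2 →
      a ℓ i + 1 ≤ a ℓ (ℓ - 1)) :
    ∀ ℓ ∈ Icc 1 k, ∀ i ∈ Ico 1 ℓ, a ℓ i + 1 ≤ a ℓ ℓ := by
  intro ℓ hℓ i hi
  have hprev := hdiag ℓ (by simp only [mem_Ico] at hi; omega) (mem_Icc.1 hℓ).2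
  obtain rfl | hi' : i = ℓ - 1 ∨ i ≤ ℓ - 2 := by simp only [mem_Ico] at hi; omega
  · exact hprev
  · linarith [hlower ℓ hℓ i (mem_Ico.1 hi).1 hi']

theorem sum_Icc_pow_pred_mul_le_diag {k : ℕ} {C : ℝ} {a : ℕ → ℕ → ℝ}
    (hbound : ∀ ℓ ∈ Icc 1 k, ∀ i ∈ Icc 1 k, 0 ≤ a ℓ i ∧ a ℓ i ≤ C)
    (hgap : ∀ ℓ ∈ Icc 1 k, ∀ i ∈ Ico 1 ℓ, a ℓ i + 1 ≤ a ℓ ℓ)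
    {n : ℕ} (hn : n ≤ k) {σ : ℕ → ℕ} (hmap : ∀ ℓ ∈ Icc 1 n, σ ℓ ∈ Icc 1 n)
    (hinj : Set.InjOn σ (Icc 1 n)) :
    ∑ ℓ ∈ Icc 1 n, (C + 1) ^ (ℓ - 1) * a ℓ (σ ℓ)
      ≤ ∑ ℓ ∈ Icc 1 n, (C + 1) ^ (ℓ - 1) * a ℓ ℓ := by
  induction n with
  | zero => simp
  | succ n ih =>
    have hsub : Icc 1 (n + 1) ⊆ Icc 1 k := Icc_subset_Icc_right hn
    have htop : n + 1 ∈ Icc 1 (n + 1) := by simp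
    rw [sum_Icc_succ_top (by omega), sum_Icc_succ_top (by omega), Nat.add_sub_cancel]
    by_cases hfix : σ (n + 1) = n + 1
    · rw [hfix]
      have := ih (by omega) (mapsTo_Icc_of_mapsTo_Icc_succ_of_fix hmap hinj hfix)
        (hinj.mono (coe_subset.2 (Icc_subset_Icc_right n.le_succ)))
      linarith
    · have hC : 0 ≤ C + 1 := by linarith [hbound _ (hsub htop) _ (hsub htop)]
      have hgain := sum_Icc_pow_pred_mul_le_add_of_le_add hC (n := n)
        (f := fun ℓ => a ℓ (σ ℓ)) (g := fun ℓ => a ℓ ℓ) fun ℓ hℓ => by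
          have hℓ' := hsub (Icc_subset_Icc_right n.le_succ hℓ)
          have hσℓ := hsub (hmap ℓ (Icc_subset_Icc_right n.le_succ hℓ))
          linarith [(hbound ℓ hℓ' _ hσℓ).2, (hbound ℓ hℓ' ℓ hℓ').1]
      have hloss : a (n + 1) (σ (n + 1)) + 1 ≤ a (n + 1) (n + 1) := by
        refine hgap _ (hsub htop) _ ?_
        have := hmap _ htop
        simp only [mem_Icc, mem_Ico] at this ⊢
        omega
      have htop_loss : (C + 1) ^ n * a (n + 1) (σ (n + 1))
          ≤ (C + 1) ^ n * a (n + 1) (n + 1) - (C + 1) ^ n := by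
        rw [← mul_sub_one]
        exact mul_le_mul_of_nonneg_left (by linarith) (pow_nonneg hC n)
      linarith

theorem identity_matching_is_max_weight_general
    (k : ℕ) (C : ℝ) (a : ℕ → ℕ → ℝ)
    (hbound : ∀ ℓ ∈ Finset.Icc 1 k, ∀ i ∈ Finset.Icc 1 k,
      0 ≤ a ℓ i ∧ a ℓ i ≤ C)
    (hdiag : ∀ ℓ : ℕ, 2 ≤ ℓ → ℓ ≤ k → a ℓ (ℓ - 1) + 1 ≤ a ℓ ℓ)
    (hlower : ∀ ℓ ∈ Finset.Icc 1 k, ∀ i : ℕ, 1 ≤ i → i ≤ ℓ - 2 →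
      a ℓ i + 1 ≤ a ℓ (ℓ - 1))
    (σ : ℕ → ℕ)
    (hσmap : ∀ ℓ ∈ Finset.Icc 1 k, σ ℓ ∈ Finset.Icc 1 k)
    (hσinj : Set.InjOn σ (Finset.Icc 1 k)) :
    ∑ ℓ ∈ Finset.Icc 1 k, (C + 1) ^ (ℓ - 1) * a ℓ (σ ℓ)
      ≤ ∑ ℓ ∈ Finset.Icc 1 k, (C + 1) ^ (ℓ - 1) * a ℓ ℓ :=
  sum_Icc_pow_pred_mul_le_diag hbound (add_one_le_diag_of_mem_Ico hdiag hlower) le_rfl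
    hσmap hσinj

/-- Cyclic monotonicity half of the Compatibility lemma: with rows and columns
indexed by `{1,…,k}`, if `0 ≤ a(ℓ,i) ≤ C`, `a(ℓ,ℓ) ≥ a(ℓ,ℓ−1) + 1`, and
`a(ℓ,ℓ−1) ≥ a(ℓ,i) + 1` for `i ≤ ℓ−2`, then the identity matching maximizes
`Σ_ℓ (C+1)^{ℓ−1}·a(ℓ,σ(ℓ))` over all permutations `σ` of `{1,…,k}`. -/
theorem identity_matching_is_max_weight
    (k : ℕ) (hk : 1 ≤ k) (C : ℝ) (hC : 1 ≤ C) (a : ℕ → ℕ → ℝ)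
    (hbound : ∀ ℓ ∈ Finset.Icc 1 k, ∀ i ∈ Finset.Icc 1 k,
      0 ≤ a ℓ i ∧ a ℓ i ≤ C)
    (hdiag : ∀ ℓ : ℕ, 2 ≤ ℓ → ℓ ≤ k → a ℓ (ℓ - 1) + 1 ≤ a ℓ ℓ)
    (hlower : ∀ ℓ ∈ Finset.Icc 1 k, ∀ i : ℕ, 1 ≤ i → i ≤ ℓ - 2 →
      a ℓ i + 1 ≤ a ℓ (ℓ - 1))
    (σ : ℕ → ℕ)
    (hσmap : ∀ ℓ ∈ Finset.Icc 1 k, σ ℓ ∈ Finset.Icc 1 k)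
    (hσinj : Set.InjOn σ (Finset.Icc 1 k)) :
    ∑ ℓ ∈ Finset.Icc 1 k, (C + 1) ^ (ℓ - 1) * a ℓ (σ ℓ)
      ≤ ∑ ℓ ∈ Finset.Icc 1 k, (C + 1) ^ (ℓ - 1) * a ℓ ℓ :=
  identity_matching_is_max_weight_general k C a hbound hdiag hlower σ hσmap hσinj
end

section
/- Let k ≥ 1 be an integer, C ≥ 1 a real number, and a : {1,…,k} × {1,…,k} → ℝ satisfy: 0 ≤ a(ℓ,i) ≤ C for all ℓ, i; a(ℓ,ℓ) ≥ a(ℓ,ℓ−1) + 1 for all 2 ≤ ℓ ≤ k; and a(ℓ,ℓ−1) ≥ a(ℓ,i) + 1 for all ℓ and all i ≤ ℓ−2. Then for all 1 ≤ p < q ≤ k and every bijection σ from {p+1,…,q} onto {p,…,q−1}: Σ_{ℓ=p+1}^{q} (C+1)^{ℓ−1} · a(ℓ, σ(ℓ)) ≤ Σ_{ℓ=p+1}^{q} (C+1)^{ℓ−1} · a(ℓ, ℓ−1). That is, the shift matching (row ℓ to column ℓ−1) is a maximum-weight matching of rows p+1,…,q to columns p,…,q−1 when row ℓ is scaled by (C+1)^{ℓ−1}.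 -/
/-! If the top row `q` is matched to its shift column `q - 1`, removing it reduces to a smaller
instance. Otherwise row `q` is matched at least two columns to the left and loses at least
`(C+1)^(q-1)`, while each lower row `ℓ` gains at most `C (C+1)^(ℓ-1) = (C+1)^ℓ - (C+1)^(ℓ-1)`;
these gains telescope to `(C+1)^(q-1) - (C+1)^p`, which the loss outweighs. -/

open Finset

theorem Finset.sum_Ioc_sub_pred {M : Type*} [AddCommGroup M] (b : ℕ → M) {p q : ℕ} (h : p ≤ q) :
    ∑ ℓ ∈ Ioc p q, (b ℓ - b (ℓ - 1)) = b q - b p := by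
  induction q, h using Nat.le_induction with
  | base => simp
  | succ q hpq ih =>
    rw [sum_Ioc_succ_top hpq, ih, Nat.add_sub_cancel]
    abel

theorem Set.BijOn.Ioc_Ico_of_map_top {σ : ℕ → ℕ} {p q : ℕ}
    (hσ : Set.BijOn σ (Finset.Ioc p (q + 1)) (Finset.Ico p (q + 1))) (htop : σ (q + 1) = q) :
    Set.BijOn σ (Finset.Ioc p q) (Finset.Ico p q) := by
  have h := hσ.sdiff_singleton (a := q + 1)
  rw [htop] at h
  rcases le_or_gt p q with hpq | hqp
  · convert h (by simpa using hpq) using 1 <;> ext <;> simp; omega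
  · simp [Ioc_eq_empty_of_le hqp.le, Ico_eq_empty_of_le hqp.le]

theorem sum_le_sum_shift_of_potential (w : ℕ → ℕ → ℝ) (b : ℕ → ℝ) (p q : ℕ) (σ : ℕ → ℕ)
    (hσ : Set.BijOn σ (Ioc p q) (Ico p q))
    (hgain : ∀ ℓ ∈ Ioc p q, ∀ j ∈ Ico p q, w ℓ j - w ℓ (ℓ - 1) ≤ b ℓ - b (ℓ - 1))
    (hloss : ∀ ℓ ∈ Ioc p q, ∀ j ∈ Ico p (ℓ - 1), w ℓ j - w ℓ (ℓ - 1) ≤ b p - b (ℓ - 1)) :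
    ∑ ℓ ∈ Ioc p q, w ℓ (σ ℓ) ≤ ∑ ℓ ∈ Ioc p q, w ℓ (ℓ - 1) := by
  induction q generalizing σ with
  | zero => simp
  | succ q ih =>
    rcases lt_or_ge q p with hqp | hpq
    · simp [Ioc_eq_empty_of_le (Nat.succ_le_of_lt hqp)]
    have htop : σ (q + 1) ∈ Ico p (q + 1) := hσ.mapsTo (by simpa using hpq)
    rw [sum_Ioc_succ_top hpq, sum_Ioc_succ_top hpq, Nat.add_sub_cancel]
    by_cases hshift : σ (q + 1) = q
    · have hrest := ih σ (hσ.Ioc_Ico_of_map_top hshift)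
        (fun ℓ hℓ j hj ↦ hgain ℓ (Ioc_subset_Ioc_right q.le_succ hℓ) j
          (Ico_subset_Ico_right q.le_succ hj))
        (fun ℓ hℓ ↦ hloss ℓ (Ioc_subset_Ioc_right q.le_succ hℓ))
      rw [hshift]
      linarith
    · have hlow : ∑ ℓ ∈ Ioc p q, (w ℓ (σ ℓ) - w ℓ (ℓ - 1)) ≤ b q - b p := by
        rw [← sum_Ioc_sub_pred b hpq]
        exact sum_le_sum fun ℓ hℓ ↦ have hℓ' := Ioc_subset_Ioc_right q.le_succ hℓ
          hgain ℓ hℓ' (σ ℓ) (hσ.mapsTo hℓ')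
      have htop_loss := hloss (q + 1) (by simpa using hpq) (σ (q + 1))
        (by simp only [mem_Ico] at htop ⊢; omega)
      rw [sum_sub_distrib] at hlow
      rw [Nat.add_sub_cancel] at htop_loss
      linarith

theorem shift_matching_is_max_weight_general
    (k : ℕ) (C : ℝ) (hC : 1 ≤ C) (a : ℕ → ℕ → ℝ)
    (hbound : ∀ ℓ ∈ Finset.Icc 1 k, ∀ i ∈ Finset.Icc 1 k,
      0 ≤ a ℓ i ∧ a ℓ i ≤ C)
    (hlower : ∀ ℓ ∈ Finset.Icc 1 k, ∀ i : ℕ, 1 ≤ i → i ≤ ℓ - 2 →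
      a ℓ i + 1 ≤ a ℓ (ℓ - 1))
    (p q : ℕ) (hp : 1 ≤ p) (hpq : p < q) (hq : q ≤ k)
    (σ : ℕ → ℕ)
    (hσ : Set.BijOn σ (Finset.Icc (p + 1) q) (Finset.Icc p (q - 1))) :
    ∑ ℓ ∈ Finset.Icc (p + 1) q, (C + 1) ^ (ℓ - 1) * a ℓ (σ ℓ)
      ≤ ∑ ℓ ∈ Finset.Icc (p + 1) q, (C + 1) ^ (ℓ - 1) * a ℓ (ℓ - 1) := by
  rw [Icc_add_one_left_eq_Ioc, Icc_sub_one_right_eq_Ico_of_not_isMin (by simp; omega)] at hσ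
  rw [Icc_add_one_left_eq_Ioc]
  refine sum_le_sum_shift_of_potential (fun ℓ j ↦ (C + 1) ^ (ℓ - 1) * a ℓ j) ((C + 1) ^ ·)
    p q σ hσ (fun ℓ hℓ j hj ↦ ?_) (fun ℓ hℓ j hj ↦ ?_)
  all_goals
    simp only [mem_Ioc, mem_Ico] at hℓ hj
    obtain ⟨n, rfl⟩ : ∃ n, ℓ = n + 1 := ⟨ℓ - 1, by omega⟩
    simp only [Nat.add_sub_cancel, ← mul_sub]
  · have hx := (hbound (n + 1) (by simp; omega) j (by simp; omega)).2
    have hy := (hbound (n + 1) (by simp; omega) n (by simp; omega)).1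
    calc (C + 1) ^ n * (a (n + 1) j - a (n + 1) n) ≤ (C + 1) ^ n * C := by gcongr; linarith
      _ = (C + 1) ^ (n + 1) - (C + 1) ^ n := by ring
  · have hdrop := hlower (n + 1) (by simp; omega) j (by omega) (by omega)
    rw [Nat.add_sub_cancel] at hdrop
    calc (C + 1) ^ n * (a (n + 1) j - a (n + 1) n) ≤ (C + 1) ^ n * (-1) := by gcongr; linarith
      _ ≤ (C + 1) ^ p - (C + 1) ^ n := by linarith [pow_nonneg (by linarith : (0 : ℝ) ≤ C + 1) p]

/-- Second half of the Compatibility lemma: under the same hypotheses on `a`,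
for any `1 ≤ p < q ≤ k` and any bijection `σ` from `{p+1,…,q}` onto
`{p,…,q−1}`, the shift matching (row `ℓ` to column `ℓ−1`) maximizes
`Σ_{ℓ=p+1}^{q} (C+1)^{ℓ−1}·a(ℓ,σ(ℓ))`. -/
theorem shift_matching_is_max_weight
    (k : ℕ) (hk : 1 ≤ k) (C : ℝ) (hC : 1 ≤ C) (a : ℕ → ℕ → ℝ)
    (hbound : ∀ ℓ ∈ Finset.Icc 1 k, ∀ i ∈ Finset.Icc 1 k,
      0 ≤ a ℓ i ∧ a ℓ i ≤ C)
    (hdiag : ∀ ℓ : ℕ, 2 ≤ ℓ → ℓ ≤ k → a ℓ (ℓ - 1) + 1 ≤ a ℓ ℓ)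
    (hlower : ∀ ℓ ∈ Finset.Icc 1 k, ∀ i : ℕ, 1 ≤ i → i ≤ ℓ - 2 →
      a ℓ i + 1 ≤ a ℓ (ℓ - 1))
    (p q : ℕ) (hp : 1 ≤ p) (hpq : p < q) (hq : q ≤ k)
    (σ : ℕ → ℕ)
    (hσ : Set.BijOn σ (Finset.Icc (p + 1) q) (Finset.Icc p (q - 1))) :
    ∑ ℓ ∈ Finset.Icc (p + 1) q, (C + 1) ^ (ℓ - 1) * a ℓ (σ ℓ)
      ≤ ∑ ℓ ∈ Finset.Icc (p + 1) q, (C + 1) ^ (ℓ - 1) * a ℓ (ℓ - 1) :=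
  shift_matching_is_max_weight_general k C hC a hbound hlower p q hp hpq hq σ hσ
end

section
/- For every ℓ ∈ {1,…,k−1}: max over all subsets S of the ground set of (v'_ℓ(S) − v'_{ℓ+1}(S)) equals (k+ℓ) · max over all A ⊆ Fin m of (v(A) − w(A)), where the differences are taken in ℤ. -/
/-!
Only copy `ℓ` is weighted differently by `v_ℓ` and `v_{ℓ+1}` (by `v` resp. `w`, with factor
`k+ℓ`), so `v_ℓ(S) − v_{ℓ+1}(T) = (k+ℓ)(v(S_ℓ) − w(T_ℓ))` whenever `S` and `T` agree outside
copy `ℓ`. For the upper bound, compare both truncations on a set `T ⊆ S` attaining `v'_ℓ(S)`.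
For the lower bound, place a maximiser `A` of `v − w` in copy `ℓ`: then `v'_ℓ ≥ (k+ℓ)v(A)`,
while any `T` attaining `v'_{ℓ+1}` lies in copy `ℓ` with `T_ℓ ⊆ A`, so monotonicity of `w` bounds
`v'_{ℓ+1}` by `(k+ℓ)w(A)`.
-/

open Finset

def copyPart (m k : ℕ) (S : Finset (Fin (k - 1) × Fin m)) (i : Fin (k - 1)) :
    Finset (Fin m) :=
  (S.filter (fun p => p.1 = i)).image Prod.snd

def scaledDU (m k : ℕ) (v w : Finset (Fin m) → ℕ) (ℓ : ℕ)
    (S : Finset (Fin (k - 1) × Fin m)) : ℕ :=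
  ∑ i : Fin (k - 1), (k + (i : ℕ) + 1) *
    (if ℓ ≤ (i : ℕ) + 1 then v (copyPart m k S i) else w (copyPart m k S i))

def itemTrunc {α : Type*} (y : ℕ) (u : Finset α → ℕ) (S : Finset α) : ℕ :=
  (S.powerset.filter (fun T => T.card ≤ y)).sup u

def ITfun (m k : ℕ) (v w : Finset (Fin m) → ℕ) (ℓ : ℕ)
    (S : Finset (Fin (k - 1) × Fin m)) : ℕ :=
  itemTrunc m (scaledDU m k v w ℓ) S

section itemTrunc

variable {α : Type*} (y : ℕ) (u : Finset α → ℕ)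

lemma le_itemTrunc {S T : Finset α} (hTS : T ⊆ S) (hT : #T ≤ y) : u T ≤ itemTrunc y u S :=
  le_sup (mem_filter.mpr ⟨mem_powerset.mpr hTS, hT⟩)

lemma exists_itemTrunc_eq (S : Finset α) :
    ∃ T ⊆ S, #T ≤ y ∧ itemTrunc y u S = u T := by
  have hne : ({T ∈ S.powerset | #T ≤ y}).Nonempty := ⟨∅, by simp⟩
  obtain ⟨T, hT, hTeq⟩ := exists_mem_eq_sup _ hne u
  rw [mem_filter, mem_powerset] at hT
  exact ⟨T, hT.1, hT.2, hTeq⟩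

end itemTrunc

section copyPart

variable {m k : ℕ}

lemma copyPart_mono {S T : Finset (Fin (k - 1) × Fin m)} (h : T ⊆ S) (i : Fin (k - 1)) :
    copyPart m k T i ⊆ copyPart m k S i :=
  image_subset_image (filter_subset_filter _ h)

lemma copyPart_singleton_product (j i : Fin (k - 1)) (A : Finset (Fin m)) :
    copyPart m k ({j} ×ˢ A) i = if i = j then A else ∅ := by
  ext x
  by_cases h : i = j
  · simp [copyPart, h]
  · simp [copyPart, h, Ne.symm h]

end copyPart

section scaledDU

variable {m k : ℕ} (v w : Finset (Fin m) → ℕ)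

lemma scaledDU_sub_scaledDU_succ {ℓ : ℕ} (j : Fin (k - 1)) (hj : (j : ℕ) + 1 = ℓ)
    {S T : Finset (Fin (k - 1) × Fin m)} (hST : ∀ i ≠ j, copyPart m k S i = copyPart m k T i) :
    (scaledDU m k v w ℓ S : ℤ) - scaledDU m k v w (ℓ + 1) T
      = (k + ℓ : ℤ) * ((v (copyPart m k S j) : ℤ) - w (copyPart m k T j)) := by
  unfold scaledDU
  rw [Nat.cast_sum, Nat.cast_sum, ← sum_sub_distrib, sum_eq_single j]
  · rw [if_pos hj.ge, if_neg (by omega)]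
    push_cast [← hj]
    ring
  · intro i _ hij
    have hiℓ : (i : ℕ) + 1 ≠ ℓ := fun h => hij (Fin.ext (by omega))
    simp only [hST i hij, show ℓ + 1 ≤ (i : ℕ) + 1 ↔ ℓ ≤ (i : ℕ) + 1 by omega, sub_self]
  · exact fun h => absurd (mem_univ j) h

end scaledDU

section ITfun

variable {m k : ℕ} (v w : Finset (Fin m) → ℕ)

lemma ITfun_sub_ITfun_succ_le {ℓ : ℕ} (j : Fin (k - 1)) (hj : (j : ℕ) + 1 = ℓ) {M : ℤ}
    (hM : ∀ A, (v A : ℤ) - w A ≤ M) (S : Finset (Fin (k - 1) × Fin m)) :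
    (ITfun m k v w ℓ S : ℤ) - ITfun m k v w (ℓ + 1) S ≤ (k + ℓ) * M := by
  obtain ⟨T, hTS, hTcard, hT⟩ := exists_itemTrunc_eq m (scaledDU m k v w ℓ) S
  have hsucc : scaledDU m k v w (ℓ + 1) T ≤ ITfun m k v w (ℓ + 1) S :=
    le_itemTrunc m _ hTS hTcard
  calc (ITfun m k v w ℓ S : ℤ) - ITfun m k v w (ℓ + 1) S
      ≤ (scaledDU m k v w ℓ T : ℤ) - scaledDU m k v w (ℓ + 1) T := by
        rw [ITfun, hT]
        omega
    _ = (k + ℓ) * ((v (copyPart m k T j) : ℤ) - w (copyPart m k T j)) :=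
        scaledDU_sub_scaledDU_succ v w j hj fun _ _ => rfl
    _ ≤ (k + ℓ) * M := mul_le_mul_of_nonneg_left (hM _) (by positivity)

lemma le_ITfun_sub_ITfun_succ (hwmono : ∀ A B : Finset (Fin m), A ⊆ B → w A ≤ w B) {ℓ : ℕ}
    (j : Fin (k - 1)) (hj : (j : ℕ) + 1 = ℓ) (A : Finset (Fin m)) :
    (k + ℓ : ℤ) * ((v A : ℤ) - w A)
      ≤ (ITfun m k v w ℓ ({j} ×ˢ A) : ℤ) - ITfun m k v w (ℓ + 1) ({j} ×ˢ A) := by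
  set S : Finset (Fin (k - 1) × Fin m) := {j} ×ˢ A
  have hS : ∀ i, copyPart m k S i = if i = j then A else ∅ :=
    fun i => copyPart_singleton_product j i A
  have hScard : #S ≤ m := by simpa [S] using card_le_univ A
  have hlow : scaledDU m k v w ℓ S ≤ ITfun m k v w ℓ S := le_itemTrunc m _ subset_rfl hScard
  obtain ⟨T, hTS, -, hT⟩ := exists_itemTrunc_eq m (scaledDU m k v w (ℓ + 1)) S
  have hoff : ∀ i ≠ j, copyPart m k S i = copyPart m k T i := fun i hi => by
    have hTi := copyPart_mono hTS i
    rw [hS, if_neg hi] at hTi ⊢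
    exact (subset_empty.mp hTi).symm
  have hTj : copyPart m k T j ⊆ A := by simpa [hS] using copyPart_mono hTS j
  have hdiff := scaledDU_sub_scaledDU_succ v w j hj hoff
  rw [hS, if_pos rfl] at hdiff
  calc (k + ℓ : ℤ) * ((v A : ℤ) - w A)
      ≤ (k + ℓ) * ((v A : ℤ) - w (copyPart m k T j)) := by
        gcongr
        exact_mod_cast hwmono _ _ hTj
    _ = (scaledDU m k v w ℓ S : ℤ) - scaledDU m k v w (ℓ + 1) T := hdiff.symm
    _ ≤ (ITfun m k v w ℓ S : ℤ) - ITfun m k v w (ℓ + 1) S := by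
        have hup : ITfun m k v w (ℓ + 1) S = scaledDU m k v w (ℓ + 1) T := hT
        omega

end ITfun

theorem IT_consecutive_difference_eq_general (m k : ℕ)
    (v w : Finset (Fin m) → ℕ)
    (hwmono : ∀ A B : Finset (Fin m), A ⊆ B → w A ≤ w B) :
    ∀ ℓ : ℕ, 1 ≤ ℓ → ℓ ≤ k - 1 →
      ((Finset.univ : Finset (Fin (k - 1) × Fin m)).powerset.sup'
          ⟨∅, Finset.empty_mem_powerset _⟩
          (fun S => (ITfun m k v w ℓ S : ℤ) - ITfun m k v w (ℓ + 1) S))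
        = (k + ℓ : ℤ) *
          ((Finset.univ : Finset (Fin m)).powerset.sup'
            ⟨∅, Finset.empty_mem_powerset _⟩
            (fun A => (v A : ℤ) - w A)) := by
  intro ℓ hℓ1 hℓk
  obtain ⟨j, hj⟩ : ∃ j : Fin (k - 1), (j : ℕ) + 1 = ℓ := ⟨⟨ℓ - 1, by omega⟩, Nat.sub_add_cancel hℓ1⟩
  apply le_antisymm
  · exact sup'_le _ _ fun S _ => ITfun_sub_ITfun_succ_le v w j hj
      (fun A => le_sup' (fun A => (v A : ℤ) - w A) (mem_powerset.mpr (subset_univ A))) S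
  · obtain ⟨A, -, hA⟩ := exists_mem_eq_sup' ⟨∅, empty_mem_powerset _⟩ fun A => (v A : ℤ) - w A
    rw [hA]
    exact (le_ITfun_sub_ITfun_succ v w hwmono j hj A).trans
      (le_sup' (fun S => (ITfun m k v w ℓ S : ℤ) - ITfun m k v w (ℓ + 1) S)
        (mem_powerset.mpr (subset_univ _)))

/-- For every `ℓ ∈ {1,…,k−1}`, the maximum over subsets `S` of the ground set
of `v'_ℓ(S) − v'_{ℓ+1}(S)` equals `(k+ℓ)` times the maximum over `A ⊆ Fin m`
of `v(A) − w(A)` (differences in `ℤ`). -/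
theorem IT_consecutive_difference_eq (m k : ℕ) (hk : 2 ≤ k)
    (v w : Finset (Fin m) → ℕ)
    (hv0 : v ∅ = 0) (hw0 : w ∅ = 0)
    (hvmono : ∀ A B : Finset (Fin m), A ⊆ B → v A ≤ v B)
    (hwmono : ∀ A B : Finset (Fin m), A ⊆ B → w A ≤ w B) :
    ∀ ℓ : ℕ, 1 ≤ ℓ → ℓ ≤ k - 1 →
      ((Finset.univ : Finset (Fin (k - 1) × Fin m)).powerset.sup'
          ⟨∅, Finset.empty_mem_powerset _⟩
          (fun S => (ITfun m k v w ℓ S : ℤ) - ITfun m k v w (ℓ + 1) S))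
        = (k + ℓ : ℤ) *
          ((Finset.univ : Finset (Fin m)).powerset.sup'
            ⟨∅, Finset.empty_mem_powerset _⟩
            (fun A => (v A : ℤ) - w A)) :=
  IT_consecutive_difference_eq_general m k v w hwmono
end

section
/- Let E be a finite type, let f : Finset E → ℝ be subadditive (f(A ∪ B) ≤ f(A) + f(B) for all A, B), and let y be a natural number. Then the item truncation f'(S) := max_{T ⊆ S, |T| ≤ y} f(T) is subadditive. (That is, the class of subadditive set functions is closed under item truncation.) -/
open Finset

/-- Item truncation at `y` of a real-valued set function:
`f'(S) = max_{T ⊆ S, |T| ≤ y} f(T)` (the empty set is always a candidate). -/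
noncomputable def itemTruncR {E : Type*} (y : ℕ) (f : Finset E → ℝ)
    (S : Finset E) : ℝ :=
  (S.powerset.filter (fun T => T.card ≤ y)).sup'
    ⟨∅, by simp⟩ f

section itemTruncR

variable {E : Type*} {y : ℕ} {f : Finset E → ℝ} {S T : Finset E}

theorem le_itemTruncR (hTS : T ⊆ S) (hT : T.card ≤ y) : f T ≤ itemTruncR y f S :=
  le_sup' f (mem_filter.2 ⟨mem_powerset.2 hTS, hT⟩)

theorem le_itemTruncR_inter [DecidableEq E] (hT : T.card ≤ y) : f (T ∩ S) ≤ itemTruncR y f S :=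
  le_itemTruncR inter_subset_right ((card_le_card inter_subset_left).trans hT)

theorem itemTruncR_le {c : ℝ} (h : ∀ T ⊆ S, T.card ≤ y → f T ≤ c) : itemTruncR y f S ≤ c :=
  sup'_le _ _ fun T hT => by
    obtain ⟨hTS, hTy⟩ := mem_filter.1 hT
    exact h T (mem_powerset.1 hTS) hTy

end itemTruncR

theorem subadditive_closed_under_itemTruncation_general
    {E : Type*} [DecidableEq E] (f : Finset E → ℝ)
    (hsub : ∀ A B : Finset E, f (A ∪ B) ≤ f A + f B)
    (y : ℕ) :
    ∀ A B : Finset E, itemTruncR y f (A ∪ B) ≤ itemTruncR y f A + itemTruncR y f B := by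
  intro A B
  refine itemTruncR_le fun T hTAB hTy => ?_
  have hsplit : T = (T ∩ A) ∪ (T ∩ B) := by
    rw [← inter_union_distrib_left, inter_eq_left.2 hTAB]
  calc f T = f ((T ∩ A) ∪ (T ∩ B)) := congrArg f hsplit
    _ ≤ f (T ∩ A) + f (T ∩ B) := hsub _ _
    _ ≤ itemTruncR y f A + itemTruncR y f B :=
      add_le_add (le_itemTruncR_inter hTy) (le_itemTruncR_inter hTy)

/-- Subadditive set functions are closed under item truncation: if `f` is
subadditive then so is `S ↦ max_{T ⊆ S, |T| ≤ y} f(T)`. -/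
theorem subadditive_closed_under_itemTruncation
    {E : Type*} [Fintype E] [DecidableEq E] (f : Finset E → ℝ)
    (hsub : ∀ A B : Finset E, f (A ∪ B) ≤ f A + f B)
    (y : ℕ) :
    ∀ A B : Finset E, itemTruncR y f (A ∪ B) ≤ itemTruncR y f A + itemTruncR y f B :=
  subadditive_closed_under_itemTruncation_general f hsub y
end
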